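/- Let R be a noetherian commutative ring such that R_𝔯 is Gorenstein for every prime 𝔯 of height 0 (condition (G₀)) and R satisfies Serre's condition (S₁). Then for every integer r ≥ 0 and every injection M ↪ N of finitely generated R-modules, the induced homomorphism ⋂^r_R M → ⋂^r_R N of exterior bi-duals is injective. -/

import Mathlib

open Module

section Defs
variable (R : Type*) [CommRing R]

/-- The `r`-th exterior bi-dual `⋂^r_R M := (⋀^r_R (M^*))^*`, realized canonically as the
module of alternating `R`-multilinear forms on `r` copies of the dual module `M^*`. -/
abbrev ExtBidual (M : Type*) [AddCommGroup M] [Module R M] (r : ℕ) :=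
  (Module.Dual R M) [⋀^Fin r]→ₗ[R] R

/-- Functoriality of the exterior bi-dual. -/
noncomputable def extBidualMap {M N : Type*} [AddCommGroup M] [Module R M]
    [AddCommGroup N] [Module R N] (r : ℕ) (f : M →ₗ[R] N) :
    ExtBidual R M r →ₗ[R] ExtBidual R N r where
  toFun φ := φ.compLinearMap f.dualMap
  map_add' := by intros; ext; rfl
  map_smul' := by intros; ext; rfl

/-- The canonical identification `⋂^s_R (R^s) = R`, given by evaluation at the
standard dual basis. -/
noncomputable def extEval (s : ℕ) : ExtBidual R (Fin s → R) s →ₗ[R] R where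
  toFun φ := φ (fun i => LinearMap.proj i)
  map_add' := by intros; rfl
  map_smul' := by intros; rfl

/-- The characteristic ideal of `M` computed from a presentation `0 → N → R^s → M → 0`
with kernel `N`: the image of the induced map `⋂^s_R N → ⋂^s_R R^s = R`. -/
noncomputable def charIdealAux (s : ℕ) (N : Submodule R (Fin s → R)) : Ideal R :=
  LinearMap.range ((extEval R s) ∘ₗ (extBidualMap R s N.subtype))

/-- The zeroth Fitting ideal of `M` computed from a presentation `0 → N → R^s → M → 0`
with kernel `N`: the ideal generated by determinants of `s × s` matrices with columns in `N`. -/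
def fittIdealAux (s : ℕ) (N : Submodule R (Fin s → R)) : Ideal R :=
  Ideal.span { x | ∃ v : Fin s → (Fin s → R), (∀ i, v i ∈ N) ∧ x = (Matrix.of v).det }
end Defs

section Defs2
variable (R : Type*) [CommRing R]

/-- `DepthGE A n` : the local ring `A` has depth at least `n`, i.e. there is a regular
sequence of length `n` contained in the maximal ideal. -/
def DepthGE (A : Type*) [CommRing A] [IsLocalRing A] (n : ℕ) : Prop :=
  ∃ rs : List A, rs.length = n ∧ (∀ r ∈ rs, r ∈ IsLocalRing.maximalIdeal A) ∧
    RingTheory.Sequence.IsRegular A rs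

/-- The height of a prime ideal. -/
noncomputable def primeHt (𝔯 : Ideal R) (h : 𝔯.IsPrime) : ℕ∞ :=
  Order.height (⟨𝔯, h⟩ : PrimeSpectrum R)

/-- Condition (G₀): the localization of `R` at every prime of height `0` is Gorenstein
(for a zero-dimensional local ring, Gorenstein means self-injective). -/
def CondG0 : Prop :=
  ∀ (𝔯 : Ideal R) (h : 𝔯.IsPrime), primeHt R 𝔯 h ≤ 0 →
    Module.Injective (Localization.AtPrime 𝔯) (Localization.AtPrime 𝔯)

/-- Serre's condition (Sₙ): `depth R_𝔯 ≥ min {n, ht 𝔯}` for every prime `𝔯`. -/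
def CondS (n : ℕ) : Prop :=
  ∀ (𝔯 : Ideal R) (h : 𝔯.IsPrime) (m : ℕ),
    (m : ℕ∞) ≤ min (n : ℕ∞) (primeHt R 𝔯 h) → DepthGE (Localization.AtPrime 𝔯) m

/-- The canonical map `I** → R** = R` for an ideal `I ⊆ R`. -/
noncomputable def bidualToRing (I : Ideal R) :
    Module.Dual R (Module.Dual R I) →ₗ[R] R where
  toFun φ := φ ((Submodule.subtype I).dualMap (LinearMap.id : R →ₗ[R] R))
  map_add' := by intros; rfl
  map_smul' := by intros; rfl
end Defs2

/-! An element of a noetherian ring vanishes as soon as, for every associated prime `P`, it is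
killed by some element outside `P`. By (S₁) every associated prime `P` has height zero (the
depth of `R_P` is zero there), so by (G₀) the ring `R_P` is self-injective. Hence any functional
on `M_P` extends along `M_P ↪ N_P`, and clearing denominators gives, for each `x ∈ M^*`, some
`u ∉ P` with `u • x` in the image of `N^* → M^*`. If `φ ∈ ⋂^r M` vanishes on the image of
`(N^*)^r`, then `(∏ uᵢ) • φ(x₁, …, x_r) = φ(u₁ • x₁, …, u_r • x_r) = 0`. -/

lemma exists_smul_eq_dualMap_of_injective {R : Type*} [CommRing R] (S : Submonoid R)
    [Module.Injective (Localization S) (Localization S)]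
    {M N : Type*} [AddCommGroup M] [Module R M] [AddCommGroup N] [Module R N]
    [Module.Finite R M] [Module.FinitePresentation R N]
    (f : M →ₗ[R] N) (hf : Function.Injective f) (x : Module.Dual R M) :
    ∃ u ∈ S, ∃ z : Module.Dual R N, u • x = f.dualMap z := by
  let ι := Algebra.linearMap R (Localization S)
  let mkM := LocalizedModule.mkLinearMap S M
  let mkN := LocalizedModule.mkLinearMap S N
  let fS := IsLocalizedModule.mapExtendScalars S mkM mkN (Localization S) f
  have hfS : Function.Injective fS := IsLocalizedModule.map_injective S mkM mkN f hf
  obtain ⟨g, hg⟩ := Module.Injective.extension_property (Localization S) (Localization S) _ _ fS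
    hfS (IsLocalizedModule.mapExtendScalars S mkM ι (Localization S) x)
  obtain ⟨z, s, hz⟩ :=
    Module.FinitePresentation.exists_lift_of_isLocalizedModule S ι (g.restrictScalars R ∘ₗ mkN)
  have hgf : ∀ m, g (mkN (f m)) = ι (x m) := fun m => by
    have hN := LinearMap.congr_fun (IsLocalizedModule.map_comp S mkM mkN f) m
    have hM := LinearMap.congr_fun (IsLocalizedModule.map_comp S mkM ι x) m
    have hgm := LinearMap.congr_fun hg (mkM m)
    simp only [LinearMap.comp_apply] at hN hM hgm
    rw [← hN, ← hM]
    exact hgm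
  have hloc : ι ∘ₗ (z ∘ₗ f) = ι ∘ₗ ((s : R) • x) := by
    ext m
    have hzm := LinearMap.congr_fun hz (f m)
    simp only [LinearMap.comp_apply, LinearMap.smul_apply, LinearMap.restrictScalars_apply,
      hgf] at hzm
    simp only [LinearMap.comp_apply, LinearMap.smul_apply, map_smul, hzm, Submonoid.smul_def]
  obtain ⟨t, ht⟩ := Module.Finite.exists_smul_of_comp_eq_of_isLocalizedModule S ι _ _ hloc
  refine ⟨t * s, S.mul_mem t.2 s.2, (t : R) • z, ?_⟩
  rw [mul_smul, map_smul, LinearMap.dualMap_apply', ← Submonoid.smul_def, ← ht,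
    Submonoid.smul_def]

lemma not_depthGE_one_of_isAssociatedPrime {R : Type*} [CommRing R] [IsNoetherianRing R]
    {P : Ideal R} [P.IsPrime] (hP : IsAssociatedPrime P R) :
    ¬ DepthGE (Localization.AtPrime P) 1 := by
  -- `P = ann b`, so `b / 1 ≠ 0` is killed by the maximal ideal of `R_P`.
  rintro ⟨rs, hlen, hmem, hreg⟩
  obtain ⟨c, rfl⟩ := List.length_eq_one_iff.mp hlen
  obtain ⟨-, b, hPb⟩ := isAssociatedPrime_iff.mp hP
  have mem_P : ∀ a, a ∈ P ↔ a * b = 0 := fun a => by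
    rw [hPb, Submodule.mem_colon_singleton, Submodule.mem_bot, smul_eq_mul]
  have hb : algebraMap R (Localization.AtPrime P) b ≠ 0 := by
    rw [Ne, IsLocalization.map_eq_zero_iff P.primeCompl]
    rintro ⟨u, hu⟩
    exact u.2 ((mem_P u).mpr hu)
  have hcb : c * algebraMap R (Localization.AtPrime P) b = 0 := by
    have hmax : IsLocalRing.maximalIdeal (Localization.AtPrime P) ≤
        (⊥ : Ideal (Localization.AtPrime P)).colon {algebraMap R _ b} := by
      rw [← Localization.AtPrime.map_eq_maximalIdeal, Ideal.map_le_iff_le_comap]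
      intro a ha
      rw [Ideal.mem_comap, Submodule.mem_colon_singleton, Submodule.mem_bot, smul_eq_mul,
        ← map_mul, (mem_P a).mp ha, map_zero]
    simpa using hmax (hmem c (List.mem_singleton_self c))
  have hc : IsSMulRegular (Localization.AtPrime P) c :=
    ((RingTheory.Sequence.isRegular_cons_iff _ c []).mp hreg).1
  exact hb (hc.right_eq_zero_of_smul hcb)

lemma primeHt_le_zero_of_isAssociatedPrime {R : Type*} [CommRing R] [IsNoetherianRing R]
    (hS : CondS R 1) {P : Ideal R} (hP : IsAssociatedPrime P R) :
    primeHt R P hP.isPrime ≤ 0 := by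
  have := hP.isPrime
  by_contra! hht
  exact not_depthGE_one_of_isAssociatedPrime hP
    (hS P hP.isPrime 1 (le_min le_rfl (Order.one_le_iff_pos.mpr hht)))

lemma eq_zero_of_forall_isAssociatedPrime {R M : Type*} [CommRing R] [IsNoetherianRing R]
    [AddCommGroup M] [Module R M] {x : M}
    (h : ∀ P : Ideal R, IsAssociatedPrime P M → ∃ u ∉ P, u • x = 0) : x = 0 := by
  by_contra hx
  obtain ⟨P, hP, hle⟩ := exists_le_isAssociatedPrime_of_isNoetherianRing R x hx
  obtain ⟨u, huP, hux⟩ := h P hP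
  exact huP (hle (Submodule.mem_colon_singleton.mpr ((Submodule.mem_bot R).mpr hux)))

theorem extBidualMap_injective (R : Type*) [CommRing R] [IsNoetherianRing R]
    (hG : CondG0 R) (hS : CondS R 1)
    (r : ℕ) (M N : Type*) [AddCommGroup M] [Module R M] [AddCommGroup N] [Module R N]
    [Module.Finite R M] [Module.Finite R N]
    (f : M →ₗ[R] N) (hf : Function.Injective f) :
    Function.Injective (extBidualMap R r f) := by
  have := Module.finitePresentation_of_finite R N
  refine (injective_iff_map_eq_zero _).mpr fun φ hφ => ?_
  ext v
  refine eq_zero_of_forall_isAssociatedPrime (R := R) fun P hP => ?_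
  have := hP.isPrime
  have := hG P hP.isPrime (primeHt_le_zero_of_isAssociatedPrime hS hP)
  choose u hu z hz using fun i =>
    exists_smul_eq_dualMap_of_injective P.primeCompl f hf (v i)
  refine ⟨∏ i, u i, prod_mem fun i _ => hu i, ?_⟩
  rw [← φ.map_smul_univ, funext hz]
  exact DFunLike.congr_fun hφ z
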